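/- For every integrable f on a bounded Vilenkin group G_m × G_m, W_n(x,y;f) → 0 as n → ∞ if and only if V_n(x,y; |f − f(x,y)|) → 0 as n → ∞, where in the second expression V_n is applied to the function (t,u) ↦ |f(t,u) − f(x,y)| and evaluated at (x,y). -/
import Mathlib


open Complex Finset

noncomputable section

/-- The generalized number system: `M 0 = 1`, `M (k+1) = m k * M k`. -/
def Mf (m : ℕ → ℕ) : ℕ → ℕ
  | 0 => 1
  | k + 1 => m k * Mf m k

/-- The generalized Rademacher function `r_k(x) = exp(2πi x_k / m_k)`. -/
def rad (m : ℕ → ℕ) (k : ℕ) (x : ∀ j, ZMod (m j)) : ℂ :=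
  Complex.exp (2 * Real.pi * Complex.I * (x k).val / (m k))

/-- The Vilenkin function `ψ_n(x) = ∏ k, r_k(x)^{n_k}` where `n_k = (n / M_k) % m_k`
is the k-th digit of `n` in the generalized number system. -/
def psi (m : ℕ → ℕ) (n : ℕ) (x : ∀ j, ZMod (m j)) : ℂ :=
  ∏ k ∈ Finset.range (n + 1), rad m k x ^ ((n / Mf m k) % m k)

/-- Vilenkin Dirichlet kernel. -/
def Dker (m : ℕ → ℕ) (n : ℕ) (x : ∀ j, ZMod (m j)) : ℂ :=
  ∑ j ∈ Finset.range n, psi m j x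

/-- One-dimensional Vilenkin Fejér kernel. -/
def Fejer (m : ℕ → ℕ) (n : ℕ) (x : ∀ j, ZMod (m j)) : ℂ :=
  (n : ℂ)⁻¹ * ∑ k ∈ Finset.range n, Dker m k x

/-- Two-dimensional Marcinkiewicz–Fejér kernel. -/
def MKer (m : ℕ → ℕ) (n : ℕ) (x y : ∀ j, ZMod (m j)) : ℂ :=
  (n : ℂ)⁻¹ * ∑ k ∈ Finset.range n, Dker m k x * Dker m k y

/-- `e_s ∈ G_m`: the element whose s-th coordinate is 1 and all others are 0. -/
def evec (m : ℕ → ℕ) (s : ℕ) : ∀ j, ZMod (m j) :=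
  fun j => if j = s then 1 else 0

/-- `r_{i,n}(x,y) = ∏_{l=i}^{n} ∑_{s=0}^{m_l-1} ψ_{M_l}(x+y)^s`. -/
def rr (m : ℕ → ℕ) (i n : ℕ) (x y : ∀ j, ZMod (m j)) : ℂ :=
  ∏ l ∈ Finset.Icc i n, ∑ s ∈ Finset.range (m l), psi m (Mf m l) (x + y) ^ s

open MeasureTheory ENNReal NNReal
open scoped Classical

/-- Discrete measurable structure on `ZMod n`. -/
instance (n : ℕ) : MeasurableSpace (ZMod n) := ⊤

/-- The cylinder set `I_k(z) = {x : x_j = z_j for j < k}`. -/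
def cyl (m : ℕ → ℕ) (k : ℕ) (z : ∀ j, ZMod (m j)) : Set (∀ j, ZMod (m j)) :=
  {x | ∀ j < k, x j = z j}

variable (m : ℕ → ℕ)

/-- Marcinkiewicz–Fejér mean via convolution with the kernel:
`σ_n(x,y;f) = ∫ f(t,u) K_n(x−t, y−u) dμ(t,u)`. -/
def sigmaMF (μ : Measure ((∀ j, ZMod (m j)) × (∀ j, ZMod (m j))))
    (n : ℕ) (f : (∀ j, ZMod (m j)) × (∀ j, ZMod (m j)) → ℂ) (x y : ∀ j, ZMod (m j)) : ℂ :=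
  ∫ tu, f tu * MKer m n (x - tu.1) (y - tu.2) ∂μ

/-- The Marcinkiewicz–Lebesgue expression `W_j(x,y;f)`. -/
def Wml (μ : Measure ((∀ j, ZMod (m j)) × (∀ j, ZMod (m j))))
    (n : ℕ) (f : (∀ j, ZMod (m j)) × (∀ j, ZMod (m j)) → ℂ) (x y : ∀ j, ZMod (m j)) : ℝ :=
  (Mf m n : ℝ)⁻¹ *
      ∑ q ∈ Finset.range n, ∑ k ∈ Finset.Icc q (n - 1), ∑ v ∈ Finset.Icc 1 (m q - 1),
        (Mf m q : ℝ) * (Mf m k : ℝ) ^ 2 *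
          ∫ tu in (cyl m k 0) ×ˢ (cyl m k (v • evec m q)),
            ‖f (x - tu.1, y - tu.2) - f (x, y)‖ * ‖rr m (k + 1) (n - 1) tu.1 tu.2‖ ∂μ +
    (Mf m n : ℝ)⁻¹ *
      ∑ q ∈ Finset.range n, ∑ k ∈ Finset.Icc q (n - 1), ∑ v ∈ Finset.Icc 1 (m q - 1),
        (Mf m q : ℝ) * (Mf m k : ℝ) ^ 2 *
          ∫ tu in (cyl m k (v • evec m q)) ×ˢ (cyl m k 0),
            ‖f (x - tu.1, y - tu.2) - f (x, y)‖ * ‖rr m (k + 1) (n - 1) tu.1 tu.2‖ ∂μ +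
    (∑ s ∈ Finset.range (n + 1), ∑ i ∈ Finset.Icc s n, ∑ v ∈ Finset.Icc 1 (m s - 1),
      (Mf m s : ℝ) * (Mf m i : ℝ) *
        ∫ tu in (cyl m n 0) ×ˢ (cyl m i (v • evec m s)),
          ‖f (x - tu.1, y - tu.2) - f (x, y)‖ ∂μ) +
    ∑ s ∈ Finset.range (n + 1), ∑ i ∈ Finset.Icc s n, ∑ v ∈ Finset.Icc 1 (m s - 1),
      (Mf m s : ℝ) * (Mf m i : ℝ) *
        ∫ tu in (cyl m i (v • evec m s)) ×ˢ (cyl m n 0),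
          ‖f (x - tu.1, y - tu.2) - f (x, y)‖ ∂μ

/-- The operator `V_n` applied to a (real-valued) function `g`, the sum of four terms. -/
def VopR (μ : Measure ((∀ j, ZMod (m j)) × (∀ j, ZMod (m j))))
    (n : ℕ) (g : (∀ j, ZMod (m j)) × (∀ j, ZMod (m j)) → ℝ) (x y : ∀ j, ZMod (m j)) : ℝ :=
  (∑ q ∈ Finset.range n, ∑ k ∈ Finset.Icc q (n - 1), ∑ v ∈ Finset.Icc 1 (m q - 1),
    (Mf m q : ℝ) * (Mf m k : ℝ) / (m k : ℝ) *
      ∫ tu in (cyl m k (v • evec m q)) ×ˢ (cyl m k 0),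
        g (x - tu.1, y - tu.2) *
          (if ∀ r ∈ Finset.Icc (k + 1) (n - 1), tu.1 r + tu.2 r = 0 then 1 else 0) ∂μ) +
  (∑ q ∈ Finset.range n, ∑ k ∈ Finset.Icc q (n - 1), ∑ v ∈ Finset.Icc 1 (m q - 1),
    (Mf m q : ℝ) * (Mf m k : ℝ) / (m k : ℝ) *
      ∫ tu in (cyl m k 0) ×ˢ (cyl m k (v • evec m q)),
        g (x - tu.1, y - tu.2) *
          (if ∀ r ∈ Finset.Icc (k + 1) (n - 1), tu.1 r + tu.2 r = 0 then 1 else 0) ∂μ) +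
  (∑ s ∈ Finset.range (n + 1), ∑ i ∈ Finset.Icc s n, ∑ v ∈ Finset.Icc 1 (m s - 1),
    (Mf m s : ℝ) * (Mf m i : ℝ) *
      ∫ tu in (cyl m n 0) ×ˢ (cyl m i (v • evec m s)), g (x - tu.1, y - tu.2) ∂μ) +
  ∑ s ∈ Finset.range (n + 1), ∑ i ∈ Finset.Icc s n, ∑ v ∈ Finset.Icc 1 (m s - 1),
    (Mf m s : ℝ) * (Mf m i : ℝ) *
      ∫ tu in (cyl m i (v • evec m s)) ×ˢ (cyl m n 0), g (x - tu.1, y - tu.2) ∂μ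

open Filter

lemma Mf_pos' (hm : ∀ k, 2 ≤ m k) (n : ℕ) : 0 < Mf m n := by
  induction n with
  | zero => exact Nat.one_pos
  | succ k ih => exact Nat.mul_pos (by have := hm k; omega) ih

lemma le_Mf' (hm : ∀ k, 2 ≤ m k) (n : ℕ) : n ≤ Mf m n := by
  induction n with
  | zero => exact Nat.zero_le _
  | succ k ih =>
    have h1 : 0 < Mf m k := Mf_pos' m hm k
    have h2 := hm k
    have : 2 * Mf m k ≤ m k * Mf m k := Nat.mul_le_mul_right _ h2
    show k + 1 ≤ m k * Mf m k
    omega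

lemma Mf_dvd' {k l : ℕ} (h : k ≤ l) : Mf m k ∣ Mf m l := by
  induction l, h using Nat.le_induction with
  | base => exact dvd_rfl
  | succ n hn ih => exact ih.trans (dvd_mul_left (Mf m n) (m n))

lemma Mf_lt' (hm : ∀ k, 2 ≤ m k) {l k : ℕ} (h : l < k) : Mf m l < Mf m k := by
  have h1 : Mf m (l + 1) ≤ Mf m k := Nat.le_of_dvd (Mf_pos' m hm k) (Mf_dvd' m h)
  have h2 : 0 < Mf m l := Mf_pos' m hm l
  have h3 := hm l
  have : 2 * Mf m l ≤ m l * Mf m l := Nat.mul_le_mul_right _ h3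
  have h4 : Mf m (l + 1) = m l * Mf m l := rfl
  omega

lemma digit_zero_lt' (hm : ∀ k, 2 ≤ m k) {k l : ℕ} (h : k < l) :
    (Mf m l / Mf m k) % m k = 0 := by
  have hpos : 0 < Mf m k := Mf_pos' m hm k
  obtain ⟨c, hc⟩ := Mf_dvd' m (show k + 1 ≤ l from h)
  have hkk : Mf m (k + 1) = m k * Mf m k := rfl
  have hdiv : Mf m l / Mf m k = m k * c := by
    rw [hc, hkk, mul_comm (m k) (Mf m k), mul_assoc,
      Nat.mul_div_cancel_left _ hpos]
  rw [hdiv, Nat.mul_mod_right]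

lemma psi_Mf' (hm : ∀ k, 2 ≤ m k) (l : ℕ) (z : ∀ j, ZMod (m j)) :
    psi m (Mf m l) z = rad m l z := by
  unfold psi
  rw [Finset.prod_eq_single l]
  · rw [Nat.div_self (Mf_pos' m hm l), Nat.mod_eq_of_lt (by have := hm l; omega), pow_one]
  · intro b _ hne
    rcases lt_or_gt_of_ne hne with hlt | hgt
    · rw [digit_zero_lt' m hm hlt, pow_zero]
    · rw [Nat.div_eq_of_lt (Mf_lt' m hm hgt), Nat.zero_mod, pow_zero]
  · intro h
    exact absurd (Finset.mem_range.mpr (Nat.lt_succ_of_le (le_Mf' m hm l))) h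

lemma sum_rad' (hm : ∀ k, 2 ≤ m k) (l : ℕ) (z : ∀ j, ZMod (m j)) :
    ∑ s ∈ Finset.range (m l), rad m l z ^ s = if z l = 0 then (m l : ℂ) else 0 := by
  haveI : NeZero (m l) := ⟨by have := hm l; omega⟩
  by_cases h : z l = 0
  · simp [h, rad]
  · have hv : 0 < (z l).val := by
      have : (z l).val ≠ 0 := fun hh => h ((ZMod.val_eq_zero _).mp hh)
      omega
    have hvm : (z l).val < m l := ZMod.val_lt _
    have hmne : (m l : ℂ) ≠ 0 := Nat.cast_ne_zero.mpr (by have := hm l; omega)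
    have h2πI : (2 * (Real.pi : ℂ) * Complex.I) ≠ 0 :=
      mul_ne_zero (mul_ne_zero two_ne_zero
        (Complex.ofReal_ne_zero.mpr Real.pi_ne_zero)) Complex.I_ne_zero
    have hne1 : rad m l z ≠ 1 := by
      intro hrad
      rw [rad, Complex.exp_eq_one_iff] at hrad
      obtain ⟨n, hn⟩ := hrad
      have hvC : ((z l).val : ℂ) = n * m l := by
        rw [div_eq_iff hmne] at hn
        apply mul_left_cancel₀ h2πI
        linear_combination hn
      have hvZ : ((z l).val : ℤ) = n * m l := by exact_mod_cast hvC
      have h1 : (0 : ℤ) < ((z l).val : ℤ) := by exact_mod_cast hv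
      have h2 : ((z l).val : ℤ) < (m l : ℤ) := by exact_mod_cast hvm
      have h3 : (0 : ℤ) < (m l : ℤ) := by exact_mod_cast (show 0 < m l by have := hm l; omega)
      rcases le_or_gt n 0 with hn0 | hn0
      · have : n * (m l : ℤ) ≤ 0 := mul_nonpos_of_nonpos_of_nonneg hn0 h3.le
        omega
      · have h4 : (1 : ℤ) ≤ n := hn0
        have : (m l : ℤ) ≤ n * (m l : ℤ) := le_mul_of_one_le_left h3.le h4
        omega
    have hpow : rad m l z ^ (m l) = 1 := by
      rw [rad, ← Complex.exp_nat_mul]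
      have harg : (m l : ℂ) * (2 * (Real.pi : ℂ) * Complex.I * ((z l).val : ℂ) / (m l : ℂ))
          = ((z l).val : ℂ) * (2 * (Real.pi : ℂ) * Complex.I) := by
        field_simp
      rw [harg]
      have := Complex.exp_int_mul_two_pi_mul_I ((z l).val : ℤ)
      push_cast at this
      exact this
    rw [geom_sum_eq hne1, hpow, if_neg h]
    simp

lemma rr_eq' (hm : ∀ k, 2 ≤ m k) (i n : ℕ) (t u : ∀ j, ZMod (m j)) :
    rr m i n t u = if ∀ l ∈ Finset.Icc i n, t l + u l = 0 then
      (∏ l ∈ Finset.Icc i n, (m l : ℂ)) else 0 := by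
  unfold rr
  have key : ∀ l, (∑ s ∈ Finset.range (m l), psi m (Mf m l) (t + u) ^ s)
      = if t l + u l = 0 then (m l : ℂ) else 0 := by
    intro l
    simp only [psi_Mf' m hm]
    rw [sum_rad' m hm l (t + u)]
    simp [Pi.add_apply]
  rw [Finset.prod_congr rfl (fun l _ => key l)]
  by_cases h : ∀ l ∈ Finset.Icc i n, t l + u l = 0
  · rw [if_pos h]
    exact Finset.prod_congr rfl fun l hl => if_pos (h l hl)
  · rw [if_neg h]
    push_neg at h
    obtain ⟨l, hl, hne⟩ := h
    exact Finset.prod_eq_zero hl (if_neg hne)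

lemma norm_rr' (hm : ∀ k, 2 ≤ m k) (i n : ℕ) (t u : ∀ j, ZMod (m j)) :
    ‖rr m i n t u‖ = (∏ l ∈ Finset.Icc i n, (m l : ℝ)) *
      (if ∀ l ∈ Finset.Icc i n, t l + u l = 0 then (1 : ℝ) else 0) := by
  rw [rr_eq' m hm]
  split_ifs with h
  · rw [mul_one, norm_prod]
    exact Finset.prod_congr rfl fun l _ => by simp
  · simp

lemma Mf_mul_prod' (a b : ℕ) (h : a ≤ b) :
    Mf m a * ∏ l ∈ Finset.Ico a b, m l = Mf m b := by
  induction b, h using Nat.le_induction with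
  | base => simp
  | succ n hn ih =>
    rw [Finset.prod_Ico_succ_top hn, ← mul_assoc, ih]
    show Mf m n * m n = m n * Mf m n
    rw [mul_comm]

lemma Wml_eq_VopR (hm : ∀ k, 2 ≤ m k)
    (μ : Measure ((∀ j, ZMod (m j)) × (∀ j, ZMod (m j))))
    (n : ℕ) (f : (∀ j, ZMod (m j)) × (∀ j, ZMod (m j)) → ℂ) (x y : ∀ j, ZMod (m j)) :
    Wml m μ n f x y = VopR m μ n (fun z => ‖f z - f (x, y)‖) x y := by
  classical
  have key : ∀ q k : ℕ, q < n → k ∈ Finset.Icc q (n - 1) →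
      ∀ S : Set ((∀ j, ZMod (m j)) × (∀ j, ZMod (m j))),
      (Mf m n : ℝ)⁻¹ * ((Mf m q : ℝ) * (Mf m k : ℝ) ^ 2 *
        ∫ tu in S, ‖f (x - tu.1, y - tu.2) - f (x, y)‖ *
          ‖rr m (k + 1) (n - 1) tu.1 tu.2‖ ∂μ)
      = (Mf m q : ℝ) * (Mf m k : ℝ) / (m k : ℝ) *
        ∫ tu in S, ‖f (x - tu.1, y - tu.2) - f (x, y)‖ *
          (if ∀ r ∈ Finset.Icc (k + 1) (n - 1), tu.1 r + tu.2 r = 0 then 1 else 0) ∂μ := by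
    intro q k hq hk S
    rw [Finset.mem_Icc] at hk
    have hn1 : 1 ≤ n := by omega
    have hkn : k + 1 ≤ n := by omega
    set P : ℝ := ∏ l ∈ Finset.Icc (k + 1) (n - 1), (m l : ℝ) with hPdef
    have hIcc : Finset.Icc (k + 1) (n - 1) = Finset.Ico (k + 1) n := by
      rw [← Finset.Ico_add_one_right_eq_Icc]
      congr 1
      omega
    have hNnat : Mf m (k + 1) * ∏ l ∈ Finset.Ico (k + 1) n, m l = Mf m n :=
      Mf_mul_prod' m (k + 1) n hkn
    have hPcast : P = ((∏ l ∈ Finset.Ico (k + 1) n, m l : ℕ) : ℝ) := by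
      rw [hPdef, hIcc, Nat.cast_prod]
    have hNnat' : Mf m n = m k * Mf m k * ∏ l ∈ Finset.Ico (k + 1) n, m l := by
      rw [← hNnat]; rfl
    have hN : (Mf m n : ℝ) = (m k : ℝ) * (Mf m k : ℝ) * P := by
      rw [hPcast, hNnat']; push_cast; ring
    have hintg : (∫ tu in S, ‖f (x - tu.1, y - tu.2) - f (x, y)‖ *
          ‖rr m (k + 1) (n - 1) tu.1 tu.2‖ ∂μ)
        = P * ∫ tu in S, ‖f (x - tu.1, y - tu.2) - f (x, y)‖ *
          (if ∀ r ∈ Finset.Icc (k + 1) (n - 1), tu.1 r + tu.2 r = 0 then 1 else 0) ∂μ := by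
      rw [← MeasureTheory.integral_const_mul]
      apply MeasureTheory.integral_congr_ae
      refine Filter.Eventually.of_forall fun tu => ?_
      simp only [norm_rr' m hm, hPdef]
      ring
    rw [hintg]
    have hm0 : (m k : ℝ) ≠ 0 := Nat.cast_ne_zero.mpr (by have := hm k; omega)
    have hMk : (Mf m k : ℝ) ≠ 0 := Nat.cast_ne_zero.mpr (Mf_pos' m hm k).ne'
    have hP0 : P ≠ 0 := by
      rw [hPdef]
      exact (Finset.prod_pos fun l _ => by
        have := hm l; positivity).ne'
    rw [hN]
    field_simp
  have hgen : ∀ (c : ℕ → ℕ → ℕ → Set ((∀ j, ZMod (m j)) × (∀ j, ZMod (m j)))),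
      (Mf m n : ℝ)⁻¹ *
        (∑ q ∈ Finset.range n, ∑ k ∈ Finset.Icc q (n - 1), ∑ v ∈ Finset.Icc 1 (m q - 1),
          (Mf m q : ℝ) * (Mf m k : ℝ) ^ 2 *
            ∫ tu in c q k v, ‖f (x - tu.1, y - tu.2) - f (x, y)‖ *
              ‖rr m (k + 1) (n - 1) tu.1 tu.2‖ ∂μ)
      = ∑ q ∈ Finset.range n, ∑ k ∈ Finset.Icc q (n - 1), ∑ v ∈ Finset.Icc 1 (m q - 1),
          (Mf m q : ℝ) * (Mf m k : ℝ) / (m k : ℝ) *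
            ∫ tu in c q k v, ‖f (x - tu.1, y - tu.2) - f (x, y)‖ *
              (if ∀ r ∈ Finset.Icc (k + 1) (n - 1), tu.1 r + tu.2 r = 0 then 1 else 0) ∂μ := by
    intro c
    rw [Finset.mul_sum]
    refine Finset.sum_congr rfl fun q hq => ?_
    rw [Finset.mul_sum]
    refine Finset.sum_congr rfl fun k hk => ?_
    rw [Finset.mul_sum]
    refine Finset.sum_congr rfl fun v _ => ?_
    exact key q k (Finset.mem_range.mp hq) hk _
  have hA := hgen fun q k v => (cyl m k 0) ×ˢ (cyl m k (v • evec m q))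
  have hB := hgen fun q k v => (cyl m k (v • evec m q)) ×ˢ (cyl m k 0)
  unfold Wml VopR
  simp only []
  rw [hA, hB]
  ring

/-- `W_n(x,y;f) → 0` if and only if `V_n(x,y;|f − f(x,y)|) → 0`. -/
theorem stmt16 (hm : ∀ k, 2 ≤ m k) (B : ℕ) (hB : ∀ k, m k ≤ B)
    (μ : Measure ((∀ j, ZMod (m j)) × (∀ j, ZMod (m j)))) [IsProbabilityMeasure μ]
    (hinv : ∀ (z : (∀ j, ZMod (m j)) × (∀ j, ZMod (m j)))
      (s : Set ((∀ j, ZMod (m j)) × (∀ j, ZMod (m j)))), μ ((fun w => z + w) ⁻¹' s) = μ s)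
    (hcyl : ∀ (k : ℕ) (z w : ∀ j, ZMod (m j)),
      μ ((cyl m k z) ×ˢ (cyl m k w)) = ((Mf m k : ℝ≥0∞) * (Mf m k : ℝ≥0∞))⁻¹)
    (f : (∀ j, ZMod (m j)) × (∀ j, ZMod (m j)) → ℂ) (hf : Integrable f μ)
    (x y : ∀ j, ZMod (m j)) :
    Tendsto (fun n => Wml m μ n f x y) atTop (nhds 0) ↔
      Tendsto (fun n => VopR m μ n (fun z => ‖f z - f (x, y)‖) x y) atTop (nhds 0) := by
  have h : (fun n => Wml m μ n f x y)
      = fun n => VopR m μ n (fun z => ‖f z - f (x, y)‖) x y :=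
    funext fun n => Wml_eq_VopR m hm μ n f x y
  rw [h]
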